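/- For all admissible functions f₁ and f₂ there exists a permutation σ of ℕ with the following property: for every permutation τ of ℕ such that (f₁·(f₂∘σ))∘τ is monotone nondecreasing, the function (f₁·(f₂∘σ))∘τ is not equivalent to the pointwise product f₁·f₂. (Hence the invariant of a scale Hilbert triple at the pair (0,2) need not be the product of its invariants at (0,1) and (1,2), so not every scale Hilbert space arises from a sequence of weight functions.) -/

import Mathlib

noncomputable section

/-- `f` is admissible: positive, monotone nondecreasing, and unbounded. -/
def Admissible (f : ℕ → ℝ) : Prop :=
  (∀ n, 0 < f n) ∧ Monotone f ∧ ¬ BddAbove (Set.range f)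

/-- Membership in the weighted space `ℓ²_f`: `∑ f n * x n ^ 2 < ∞`. -/
def MemW (f : ℕ → ℝ) (x : ℕ → ℝ) : Prop :=
  Summable fun n => f n * x n ^ 2

/-- The `ℓ²_f` norm of a sequence, `(∑ f n * x n ^ 2)^(1/2)`. -/
noncomputable def wNorm (f : ℕ → ℝ) (x : ℕ → ℝ) : ℝ :=
  Real.sqrt (∑' n, f n * x n ^ 2)

/-- Equivalence of positive weight functions: `(1/c) f₁ ≤ f₂ ≤ c f₁`. -/
def FEquiv (f₁ f₂ : ℕ → ℝ) : Prop :=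
  ∃ c : ℝ, 0 < c ∧ ∀ n, (1 / c) * f₁ n ≤ f₂ n ∧ f₂ n ≤ c * f₁ n

/-- The Hilbert space `ℓ²` of square-summable real sequences. -/
abbrev L2 := lp (fun _ : ℕ => ℝ) 2

/-!
Cut `ℕ` into consecutive blocks `[a k, a (k + 1))` and let `σ` reverse each block. Choosing
the blocks long enough, `f₁ n * f₂ (σ n)` exceeds `k * (f₁ · f₂)(a k)` for every `n ≥ a k`:
inside block `k` one of `n`, `σ n` lies in the upper half of the block, beyond block `k` both
are large. So `f₁ · (f₂ ∘ σ)` is at most `k * (f₁ · f₂)(a k)` only at the `a k` indices below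
`a k`, whereas `(f₁ · (f₂ ∘ σ)) ∘ τ ≤ k * (f₁ · f₂)` with `τ` injective would give `a k + 1`.
-/

open Filter

theorem not_forall_comp_le_mul_of_sublevel_lt {g h : ℕ → ℝ} (hh : Monotone h) {c : ℝ}
    (hc : 0 ≤ c) {N : ℕ} (hN : ∀ n, g n ≤ c * h N → n < N) {τ : ℕ → ℕ}
    (hτ : Function.Injective τ) : ¬ ∀ n, g (τ n) ≤ c * h n := by
  intro hle
  have hmaps : ∀ n ∈ Finset.Iic N, τ n ∈ Finset.Iio N := fun n hn =>
    Finset.mem_Iio.mpr <| hN _ <|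
      (hle n).trans (mul_le_mul_of_nonneg_left (hh (Finset.mem_Iic.mp hn)) hc)
  have hcard := Finset.card_le_card_of_injOn τ hmaps hτ.injOn
  simp only [Nat.card_Iic, Nat.card_Iio] at hcard
  omega

section BlockReverse

/-- The index `k` of the block `[a k, a (k + 1))` containing `n`. -/
def blockIndex (a : ℕ → ℕ) (n : ℕ) : ℕ :=
  Nat.findGreatest (fun k => a k ≤ n) n

def blockReverse (a : ℕ → ℕ) (n : ℕ) : ℕ :=
  a (blockIndex a n) + a (blockIndex a n + 1) - 1 - n

variable {a : ℕ → ℕ}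

theorem mem_block_blockIndex (ha : StrictMono a) (ha0 : a 0 = 0) (n : ℕ) :
    a (blockIndex a n) ≤ n ∧ n < a (blockIndex a n + 1) := by
  refine ⟨Nat.findGreatest_spec (P := fun k => a k ≤ n) (Nat.zero_le n) (by simp [ha0]), ?_⟩
  by_cases hn : blockIndex a n + 1 ≤ n
  · exact not_le.mp (Nat.findGreatest_is_greatest (P := fun k => a k ≤ n) (Nat.lt_succ_self _) hn)
  · exact (not_le.mp hn).trans_le (ha.id_le _)

theorem blockIndex_eq (ha : StrictMono a) (ha0 : a 0 = 0) {k n : ℕ} (hk : a k ≤ n)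
    (hk' : n < a (k + 1)) : blockIndex a n = k := by
  obtain ⟨hj, hj'⟩ := mem_block_blockIndex ha ha0 n
  have h₁ : k < blockIndex a n + 1 := ha.lt_iff_lt.mp (hk.trans_lt hj')
  have h₂ : blockIndex a n < k + 1 := ha.lt_iff_lt.mp (hj.trans_lt hk')
  omega

theorem blockReverse_of_mem (ha : StrictMono a) (ha0 : a 0 = 0) {k n : ℕ} (hk : a k ≤ n)
    (hk' : n < a (k + 1)) : blockReverse a n = a k + a (k + 1) - 1 - n := by
  rw [blockReverse, blockIndex_eq ha ha0 hk hk']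

theorem blockReverse_involutive (ha : StrictMono a) (ha0 : a 0 = 0) :
    Function.Involutive (blockReverse a) := by
  intro n
  obtain ⟨hk, hk'⟩ := mem_block_blockIndex ha ha0 n
  rw [blockReverse_of_mem ha ha0 hk hk',
    blockReverse_of_mem ha ha0 (k := blockIndex a n) (by omega) (by omega)]
  omega

theorem add_le_add_blockReverse (ha : StrictMono a) (ha0 : a 0 = 0) {k n : ℕ}
    (hk : a k ≤ n) : a k + a (k + 1) ≤ n + blockReverse a n + 1 := by
  obtain ⟨hj, hj'⟩ := mem_block_blockIndex ha ha0 n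
  have hkj : k ≤ blockIndex a n := Nat.lt_succ_iff.mp (ha.lt_iff_lt.mp (hk.trans_lt hj'))
  have h₁ := ha.monotone hkj
  have h₂ := ha.monotone (Nat.add_le_add_right hkj 1)
  rw [blockReverse_of_mem ha ha0 hj hj']
  omega

end BlockReverse

theorem Admissible.tendsto_atTop {f : ℕ → ℝ} (hf : Admissible f) : Tendsto f atTop atTop :=
  tendsto_atTop_atTop_of_monotone' hf.2.1 hf.2.2

theorem Admissible.exists_lt_mul_of_le_max {f₁ f₂ : ℕ → ℝ} (h₁ : Admissible f₁)
    (h₂ : Admissible f₂) (T : ℝ) : ∃ N, ∀ i j, N ≤ max i j → T < f₁ i * f₂ j := by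
  obtain ⟨N, hN⟩ :=
    (((h₂.tendsto_atTop.const_mul_atTop (h₁.1 0)).eventually_gt_atTop T).and
      ((h₁.tendsto_atTop.atTop_mul_const (h₂.1 0)).eventually_gt_atTop T)).exists_forall_of_atTop
  refine ⟨N, fun i j hij => ?_⟩
  rcases le_max_iff.mp hij with hi | hj
  · exact (hN i hi).2.trans_le <|
      mul_le_mul_of_nonneg_left (h₂.2.1 (Nat.zero_le j)) (h₁.1 i).le
  · exact (hN j hj).1.trans_le <|
      mul_le_mul_of_nonneg_right (h₁.2.1 (Nat.zero_le i)) (h₂.1 j).le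

namespace Admissible

variable {f₁ f₂ : ℕ → ℝ}

def blockRadius (h₁ : Admissible f₁) (h₂ : Admissible f₂) (k x : ℕ) : ℕ :=
  (h₁.exists_lt_mul_of_le_max h₂ (k * (f₁ x * f₂ x))).choose

def blockStart (h₁ : Admissible f₁) (h₂ : Admissible f₂) : ℕ → ℕ
  | 0 => 0
  | k + 1 => blockStart h₁ h₂ k + 2 * blockRadius h₁ h₂ k (blockStart h₁ h₂ k) + 1

theorem blockStart_strictMono (h₁ : Admissible f₁) (h₂ : Admissible f₂) :
    StrictMono (blockStart h₁ h₂) :=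
  strictMono_nat_of_lt_succ fun k => by simp only [blockStart]; omega

theorem lt_blockStart_of_le (h₁ : Admissible f₁) (h₂ : Admissible f₂) {k n : ℕ}
    (hn : f₁ n * f₂ (blockReverse (blockStart h₁ h₂) n) ≤
      k * (f₁ (blockStart h₁ h₂ k) * f₂ (blockStart h₁ h₂ k))) :
    n < blockStart h₁ h₂ k := by
  by_contra! hkn
  have hsum := add_le_add_blockReverse (blockStart_strictMono h₁ h₂) rfl hkn
  simp only [blockStart] at hsum
  have hradius : blockRadius h₁ h₂ k (blockStart h₁ h₂ k) ≤
      max n (blockReverse (blockStart h₁ h₂) n) := by omega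
  exact hn.not_gt <|
    (h₁.exists_lt_mul_of_le_max h₂ _).choose_spec n _ hradius

theorem exists_perm_sublevel_lt (h₁ : Admissible f₁) (h₂ : Admissible f₂) :
    ∃ σ : Equiv.Perm ℕ, ∀ k : ℕ, ∃ N, ∀ n,
      f₁ n * f₂ (σ n) ≤ k * (f₁ N * f₂ N) → n < N :=
  ⟨(blockReverse_involutive (blockStart_strictMono h₁ h₂) rfl).toPerm,
    fun k => ⟨blockStart h₁ h₂ k, fun _ => lt_blockStart_of_le h₁ h₂⟩⟩

theorem monotone_mul (h₁ : Admissible f₁) (h₂ : Admissible f₂) :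
    Monotone fun n => f₁ n * f₂ n := fun _ _ hmn =>
  mul_le_mul (h₁.2.1 hmn) (h₂.2.1 hmn) (h₂.1 _).le (h₁.1 _).le

end Admissible

/-- For admissible `f₁, f₂` there is a permutation `σ` of `ℕ` such that the
monotone rearrangement of `f₁·(f₂∘σ)` is not equivalent to the pointwise
product `f₁·f₂`. -/
theorem exists_perm_rearrangement_not_product (f₁ f₂ : ℕ → ℝ)
    (h₁ : Admissible f₁) (h₂ : Admissible f₂) :
    ∃ σ : Equiv.Perm ℕ, ∀ τ : Equiv.Perm ℕ,
      Monotone (fun n => f₁ (τ n) * f₂ (σ (τ n))) →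
      ¬ FEquiv (fun n => f₁ (τ n) * f₂ (σ (τ n))) (fun n => f₁ n * f₂ n) := by
  obtain ⟨σ, hσ⟩ := h₁.exists_perm_sublevel_lt h₂
  refine ⟨σ, fun τ _ ⟨c, hc, hequiv⟩ => ?_⟩
  obtain ⟨N, hN⟩ := hσ ⌈c⌉₊
  refine not_forall_comp_le_mul_of_sublevel_lt (h₁.monotone_mul h₂) (Nat.cast_nonneg _) hN
    τ.injective fun n => ?_
  calc f₁ (τ n) * f₂ (σ (τ n)) ≤ c * (f₁ n * f₂ n) := by
        have := (hequiv n).1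
        rw [one_div] at this
        exact (inv_mul_le_iff₀ hc).mp this
    _ ≤ ⌈c⌉₊ * (f₁ n * f₂ n) :=
        mul_le_mul_of_nonneg_right (Nat.le_ceil c) (mul_pos (h₁.1 n) (h₂.1 n)).le
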